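/- arXiv:2306.16059 — 5 statements merged into one kernel-verified Lean document; each statement's English description precedes it below -/
import Mathlib

section
/- For the core tent map f with slope λ ∈ (√2, 2) and any backward orbit (x_r)_{r∈ℕ} (i.e., f(x_{r+1}) = x_r for all r), there are infinitely many indices r with x_r ≥ p, where p is the fixed point of f. In particular, since p > f(a), there are infinitely many r with x_r ∈ (f(a), b]. -/
/-!
If a backward orbit stayed below the fixed point `p` from some index `N` on, then every
preimage step would take the left branch, since the right branch maps `[a, p)` above
`λ (1 - p) = p`. Hence `x N = λ ^ k * x (N + k) ≥ λ ^ k * a` for all `k`, which is unbounded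
because `λ > 1` and `a > 0`, contradicting `x N ≤ b`. The second claim follows from
`T a ≤ λ a < p`, where the last inequality amounts to `(λ - 1) (λ ^ 2 - 2) > 0`.
-/

open Set

theorem eq_pow_mul_add_of_forall_eq_mul {x : ℕ → ℝ} {c : ℝ} {N : ℕ}
    (h : ∀ r, N ≤ r → x r = c * x (r + 1)) (k : ℕ) : x N = c ^ k * x (N + k) := by
  induction k with
  | zero => simp
  | succ k ih =>
    rw [ih, h (N + k) (by omega), pow_succ, ← add_assoc]
    ring

theorem not_eventually_eq_mul_of_mem_Icc {x : ℕ → ℝ} {c a b : ℝ} (hc : 1 < c) (ha : 0 < a)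
    (hx : ∀ r, x r ∈ Icc a b) (N : ℕ) : ¬ ∀ r, N ≤ r → x r = c * x (r + 1) := by
  intro h
  obtain ⟨k, hk⟩ := pow_unbounded_of_one_lt (b / a) hc
  have hlarge : b < c ^ k * a := (div_lt_iff₀ ha).1 hk
  have hsmall : c ^ k * a ≤ x N := by
    rw [eq_pow_mul_add_of_forall_eq_mul h k]
    exact mul_le_mul_of_nonneg_left (hx _).1 (pow_nonneg (by linarith) k)
  linarith [(hx N).2]

theorem tent_eq_mul_of_lt_of_lt {lam p y : ℝ} {T : ℝ → ℝ}
    (hT : ∀ x, T x = min (lam * x) (lam * (1 - x))) (hlam : 0 < lam) (hp : lam * (1 - p) = p)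
    (hy : y < p) (hTy : T y < p) : T y = lam * y := by
  have hright : p < lam * (1 - y) := by nlinarith
  rcases min_choice (lam * y) (lam * (1 - y)) with h | h
  · rw [hT, h]
  · rw [hT, h] at hTy
    linarith

theorem mul_one_sub_div_one_add {lam : ℝ} (hlam : 1 + lam ≠ 0) :
    lam * (1 - lam / (1 + lam)) = lam / (1 + lam) := by
  field_simp
  ring

theorem mul_mul_one_sub_half_lt_div_one_add {lam : ℝ} (hlam : lam ∈ Ioo (Real.sqrt 2) 2) :
    lam * (lam * (1 - lam / 2)) < lam / (1 + lam) := by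
  obtain ⟨hl, hr⟩ := hlam
  have hsq : 2 < lam ^ 2 := Real.sqrt_lt' (by linarith [Real.sqrt_nonneg 2]) |>.1 hl
  have hone : 1 < lam := Real.one_lt_sqrt_two.trans hl
  rw [lt_div_iff₀ (by linarith)]
  nlinarith [mul_pos (sub_pos.2 hone) (sub_pos.2 hsq)]

theorem backward_orbit_often_above_fixed_point_general
    (lam : ℝ) (hlam : lam ∈ Set.Ioo (Real.sqrt 2) 2)
    (T : ℝ → ℝ) (hT : ∀ x, T x = min (lam * x) (lam * (1 - x)))
    (a b p : ℝ)
    (ha : a = lam * (1 - lam / 2))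
    (hp : p = lam / (1 + lam))
    (x : ℕ → ℝ) (hmem : ∀ r, x r ∈ Set.Icc a b)
    (hback : ∀ r, T (x (r + 1)) = x r) :
    {r : ℕ | p ≤ x r}.Infinite ∧ {r : ℕ | x r ∈ Set.Ioc (T a) b}.Infinite := by
  have hone : 1 < lam := Real.one_lt_sqrt_two.trans hlam.1
  have ha0 : 0 < a := by rw [ha]; nlinarith [hlam.2]
  have hTa : T a < p := by
    rw [hp]
    exact (hT a ▸ min_le_left _ _ : T a ≤ lam * a).trans_lt
      (ha ▸ mul_mul_one_sub_half_lt_div_one_add hlam)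
  have habove : {r : ℕ | p ≤ x r}.Infinite := by
    intro hfin
    obtain ⟨N, hN⟩ := hfin.bddAbove
    have hbelow : ∀ r, N < r → x r < p := fun r hr =>
      lt_of_not_ge fun h => (hN h).not_gt hr
    refine not_eventually_eq_mul_of_mem_Icc hone ha0 hmem (N + 1) fun r hr => ?_
    rw [← hback r]
    exact tent_eq_mul_of_lt_of_lt hT (by linarith)
      (hp ▸ mul_one_sub_div_one_add (by positivity))
      (hbelow (r + 1) (by omega)) (hback r ▸ hbelow r (by omega))
  exact ⟨habove, habove.mono fun r hr => ⟨hTa.trans_le hr, (hmem r).2⟩⟩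

/-- For the core tent map of slope `λ ∈ (√2,2)` and any backward orbit `(x_r)` (so
`f(x_{r+1}) = x_r` for all `r`), infinitely many indices `r` have `x_r ≥ p`, where `p`
is the fixed point; in particular (since `p > f(a)`) infinitely many `r` have
`x_r ∈ (f(a), b]`. -/
theorem backward_orbit_often_above_fixed_point
    (lam : ℝ) (hlam : lam ∈ Set.Ioo (Real.sqrt 2) 2)
    (T : ℝ → ℝ) (hT : ∀ x, T x = min (lam * x) (lam * (1 - x)))
    (a b p : ℝ)
    (ha : a = lam * (1 - lam / 2)) (hb : b = lam / 2)
    (hp : p = lam / (1 + lam))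
    (x : ℕ → ℝ) (hmem : ∀ r, x r ∈ Set.Icc a b)
    (hback : ∀ r, T (x (r + 1)) = x r) :
    {r : ℕ | p ≤ x r}.Infinite ∧ {r : ℕ | x r ∈ Set.Ioc (T a) b}.Infinite :=
  backward_orbit_often_above_fixed_point_general lam hlam T hT a b p ha hp x hmem hback
end

section
/- For the core tent map f with slope λ ∈ (√2, 2), every π₀-fiber ⟨x⟩ = π₀⁻¹(x) of the inverse limit Î is a Cantor set (nonempty, compact, perfect, totally disconnected). -/
/-- The right-branch inverse of the tent map. -/
noncomputable def tentG (lam v : ℝ) : ℝ := 1 - v / lam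

/-- The (finite) set of possible `r`-th coordinates in the fiber over `x0`. -/
def tentF (lam x0 : ℝ) : ℕ → Set ℝ
  | 0 => {x0}
  | r + 1 => (fun v => v / lam) '' tentF lam x0 r ∪ tentG lam '' tentF lam x0 r

lemma tentF_finite (lam x0 : ℝ) : ∀ r, (tentF lam x0 r).Finite
  | 0 => Set.finite_singleton _
  | r + 1 => ((tentF_finite lam x0 r).image _).union ((tentF_finite lam x0 r).image _)

set_option maxHeartbeats 2000000 in
/-- For the core tent map of slope `λ ∈ (√2,2)`, every `π₀`-fiber of the inverse limit
is a Cantor set: nonempty, compact, perfect, and totally disconnected. -/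
theorem tent_fiber_is_cantor
    (lam : ℝ) (hlam : lam ∈ Set.Ioo (Real.sqrt 2) 2)
    (T : ℝ → ℝ) (hT : ∀ x, T x = min (lam * x) (lam * (1 - x)))
    (a b : ℝ) (ha : a = lam * (1 - lam / 2)) (hb : b = lam / 2)
    (x0 : ℝ) (hx0 : x0 ∈ Set.Icc a b)
    (C : Set (ℕ → ℝ))
    (hC : C = {x : ℕ → ℝ | (∀ r, x r ∈ Set.Icc a b) ∧ (∀ r, T (x (r + 1)) = x r) ∧
                x 0 = x0}) :
    C.Nonempty ∧ IsCompact C ∧ Perfect C ∧ IsTotallyDisconnected C := by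
  obtain ⟨hs, hl2⟩ := hlam
  have hs1 : (1 : ℝ) < Real.sqrt 2 := by
    nlinarith [Real.sq_sqrt (show (0:ℝ) ≤ 2 by norm_num), Real.sqrt_nonneg 2]
  have hl1 : 1 < lam := hs1.trans hs
  have hl0 : 0 < lam := by linarith
  have hll : 2 < lam * lam := by
    have h := mul_self_lt_mul_self (Real.sqrt_nonneg 2) hs
    rwa [Real.mul_self_sqrt (by norm_num)] at h
  subst ha hb hC
  have ha0 : 0 < lam * (1 - lam / 2) := by nlinarith
  have hahalf : lam * (1 - lam / 2) < 1/2 := by nlinarith [sq_nonneg (lam - 1)]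
  have hbhalf : (1:ℝ)/2 < lam / 2 := by linarith
  have hab : lam * (1 - lam / 2) < lam / 2 := hahalf.trans hbhalf
  have hlaa : lam * (1 - lam / 2) ≤ lam * (lam * (1 - lam / 2)) := by nlinarith
  have hlab : lam * (lam * (1 - lam / 2)) < lam / 2 := by
    nlinarith [mul_pos hl0 (mul_pos (show (0:ℝ) < lam - 1 by linarith)
      (show (0:ℝ) < lam - 1 by linarith))]
  have hl1ne : lam + 1 ≠ 0 := by positivity
  have hpb : lam / (lam + 1) < lam / 2 := by
    rw [div_lt_div_iff₀ (by linarith) (by norm_num)]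
    nlinarith
  have hlap : lam * (lam * (1 - lam / 2)) < lam / (lam + 1) := by
    rw [lt_div_iff₀ (by linarith : (0:ℝ) < lam + 1)]
    nlinarith [mul_pos hl0 (mul_pos (show (0:ℝ) < lam - 1 by linarith)
      (show (0:ℝ) < lam * lam - 2 by linarith))]
  -- basic facts about tentG
  have hg_mem : ∀ v ∈ Set.Icc (lam * (1 - lam / 2)) (lam / 2),
      tentG lam v ∈ Set.Icc (lam * (1 - lam / 2)) (lam / 2) := by
    intro v hv
    obtain ⟨h1, h2⟩ := hv
    have hdv : v / lam * lam = v := div_mul_cancel₀ v hl0.ne'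
    unfold tentG
    constructor
    · nlinarith [sq_nonneg (lam - 1)]
    · nlinarith
  have hTg : ∀ v ∈ Set.Icc (lam * (1 - lam / 2)) (lam / 2), T (tentG lam v) = v := by
    intro v hv
    rw [hT]
    have e0 : lam * (v / lam) = v := mul_div_cancel₀ v hl0.ne'
    have e1 : lam * tentG lam v = lam - v := by
      unfold tentG; rw [mul_sub, mul_one, e0]
    have e2 : lam * (1 - tentG lam v) = v := by
      have h : (1:ℝ) - tentG lam v = v / lam := by unfold tentG; ring
      rw [h, e0]
    rw [e1, e2]
    exact min_eq_right (by have := hv.2; linarith)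
  have hpre : ∀ v, ∀ w ∈ Set.Icc (lam * (1 - lam / 2)) (lam / 2), T w = v →
      w = v / lam ∨ w = tentG lam v := by
    intro v w hw hTw
    rw [hT] at hTw
    rcases le_total (lam * w) (lam * (1 - w)) with h | h
    · left
      rw [min_eq_left h] at hTw
      rw [eq_div_iff hl0.ne']
      linarith
    · right
      rw [min_eq_right h] at hTw
      have hd : v / lam = 1 - w := by rw [div_eq_iff hl0.ne']; linarith
      unfold tentG
      rw [hd]; ring
  have hgiter_mem : ∀ (k : ℕ), ∀ v ∈ Set.Icc (lam * (1 - lam / 2)) (lam / 2),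
      (tentG lam)^[k] v ∈ Set.Icc (lam * (1 - lam / 2)) (lam / 2) := by
    intro k
    induction k with
    | zero => intro v hv; simpa using hv
    | succ k ih =>
      intro v hv
      rw [Function.iterate_succ_apply']
      exact hg_mem _ (ih v hv)
  -- MANY CHOICES: every backward orbit hits [lam*a, b) beyond any N
  have manyc : ∀ x : ℕ → ℝ, (∀ r, x r ∈ Set.Icc (lam * (1 - lam / 2)) (lam / 2)) →
      (∀ r, T (x (r + 1)) = x r) →
      ∀ N, ∃ r, N ≤ r ∧ x r ∈ Set.Ico (lam * (lam * (1 - lam / 2))) (lam / 2) := by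
    intro x hxm hxT N
    by_contra hcon
    push_neg at hcon
    have hforced : ∀ r, N ≤ r → x (r + 1) = tentG lam (x r) := by
      intro r hr
      rcases hpre (x r) (x (r + 1)) (hxm (r + 1)) (hxT r) with h | h
      · rcases lt_or_ge (x r) (lam * (lam * (1 - lam / 2))) with hlt | hge
        · exfalso
          have hd : x r / lam < lam * (1 - lam / 2) := by rw [div_lt_iff₀ hl0]; nlinarith
          have := (hxm (r + 1)).1
          rw [h] at this
          linarith
        · have hxb : x r = lam / 2 := by
            rcases eq_or_lt_of_le (hxm r).2 with h' | h'
            · exact h'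
            · exact absurd ⟨hge, h'⟩ (hcon r hr)
          rw [h, hxb]
          unfold tentG
          field_simp
          ring
      · exact h
    have hiter : ∀ k, x (N + k) = (tentG lam)^[k] (x N) := by
      intro k
      induction k with
      | zero => simp
      | succ k ih =>
        have he : N + (k + 1) = (N + k) + 1 := rfl
        rw [he, hforced (N + k) (Nat.le_add_right N k), ih,
          Function.iterate_succ_apply']
    have hgstep : ∀ z, tentG lam z - lam / (lam + 1) = (lam / (lam + 1) - z) / lam := by
      intro z
      unfold tentG
      field_simp
      ring
    have hdist : ∀ k u, |(tentG lam)^[k] u - lam / (lam + 1)|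
        = |u - lam / (lam + 1)| / lam ^ k := by
      intro k
      induction k with
      | zero => intro u; simp
      | succ k ih =>
        intro u
        rw [Function.iterate_succ_apply', pow_succ, hgstep, abs_div,
          abs_of_pos hl0, abs_sub_comm, ih, div_div]
    obtain ⟨m, hm1, hm2, hmpos⟩ : ∃ m : ℝ,
        m ≤ lam / (lam + 1) - lam * (lam * (1 - lam / 2)) ∧
        m ≤ lam / 2 - lam / (lam + 1) ∧ 0 < m :=
      ⟨min (lam / (lam + 1) - lam * (lam * (1 - lam / 2))) (lam / 2 - lam / (lam + 1)),
        min_le_left _ _, min_le_right _ _, lt_min (by linarith) (by linarith)⟩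
    obtain ⟨k, hk⟩ := pow_unbounded_of_one_lt ((lam / 2 - lam * (1 - lam / 2)) / m) hl1
    have hk' : lam / 2 - lam * (1 - lam / 2) < lam ^ k * m := by
      rw [div_lt_iff₀ hmpos] at hk
      linarith
    have h1 : |x (N + k) - lam / (lam + 1)| ≤ (lam / 2 - lam * (1 - lam / 2)) / lam ^ k := by
      rw [hiter k, hdist]
      apply div_le_div_of_nonneg_right ?_ (pow_pos hl0 k).le
      rw [abs_le]
      have h2 := (hxm N).1
      have h3 := (hxm N).2
      constructor <;> linarith
    have h2 : (lam / 2 - lam * (1 - lam / 2)) / lam ^ k < m := by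
      rw [div_lt_iff₀ (pow_pos hl0 k)]
      linarith
    have habs : |x (N + k) - lam / (lam + 1)| < m := lt_of_le_of_lt h1 h2
    rw [abs_lt] at habs
    obtain ⟨hab1, hab2⟩ := habs
    exact hcon (N + k) (Nat.le_add_right N k) ⟨by linarith, by linarith⟩
  -- NONEMPTY
  have hne : Set.Nonempty {x : ℕ → ℝ |
      (∀ r, x r ∈ Set.Icc (lam * (1 - lam / 2)) (lam / 2)) ∧
      (∀ r, T (x (r + 1)) = x r) ∧ x 0 = x0} := by
    refine ⟨fun s => (tentG lam)^[s] x0, fun r => hgiter_mem r x0 hx0, fun r => ?_, by simp⟩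
    show T ((tentG lam)^[r + 1] x0) = (tentG lam)^[r] x0
    rw [Function.iterate_succ_apply']
    exact hTg _ (hgiter_mem r x0 hx0)
  -- CLOSED and COMPACT
  have hTcont : Continuous T := by
    have hTe : T = fun x => min (lam * x) (lam * (1 - x)) := funext hT
    rw [hTe]
    fun_prop
  have hclosed : IsClosed {x : ℕ → ℝ |
      (∀ r, x r ∈ Set.Icc (lam * (1 - lam / 2)) (lam / 2)) ∧
      (∀ r, T (x (r + 1)) = x r) ∧ x 0 = x0} := by
    have he : {x : ℕ → ℝ |
        (∀ r, x r ∈ Set.Icc (lam * (1 - lam / 2)) (lam / 2)) ∧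
        (∀ r, T (x (r + 1)) = x r) ∧ x 0 = x0} =
        (⋂ r, (fun z : ℕ → ℝ => z r) ⁻¹' Set.Icc (lam * (1 - lam / 2)) (lam / 2)) ∩
        ((⋂ r, {z : ℕ → ℝ | T (z (r + 1)) = z r}) ∩ {z : ℕ → ℝ | z 0 = x0}) := by
      ext z
      simp [Set.mem_iInter]
    rw [he]
    refine (isClosed_iInter fun r => isClosed_Icc.preimage (continuous_apply r)).inter
      ((isClosed_iInter fun r => isClosed_eq (hTcont.comp (continuous_apply (r + 1)))
        (continuous_apply r)).inter (isClosed_eq (continuous_apply 0) continuous_const))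
  have hcompact : IsCompact {x : ℕ → ℝ |
      (∀ r, x r ∈ Set.Icc (lam * (1 - lam / 2)) (lam / 2)) ∧
      (∀ r, T (x (r + 1)) = x r) ∧ x 0 = x0} := by
    refine (isCompact_univ_pi fun _ : ℕ =>
      (isCompact_Icc : IsCompact (Set.Icc (lam * (1 - lam / 2))
        (lam / 2)))).of_isClosed_subset hclosed ?_
    intro z hz i _
    exact hz.1 i
  -- PERFECT
  have hperf_key : ∀ x ∈ {x : ℕ → ℝ |
      (∀ r, x r ∈ Set.Icc (lam * (1 - lam / 2)) (lam / 2)) ∧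
      (∀ r, T (x (r + 1)) = x r) ∧ x 0 = x0}, ∀ n : ℕ,
      ∃ y ∈ {x : ℕ → ℝ |
      (∀ r, x r ∈ Set.Icc (lam * (1 - lam / 2)) (lam / 2)) ∧
      (∀ r, T (x (r + 1)) = x r) ∧ x 0 = x0}, y ≠ x ∧ ∀ s ≤ n, y s = x s := by
    intro x hx n
    obtain ⟨hxm, hxT, hxz⟩ := hx
    obtain ⟨r, hrn, hva, hvb⟩ := manyc x hxm hxT (n + 1)
    have hxrmem : x r ∈ Set.Icc (lam * (1 - lam / 2)) (lam / 2) := ⟨by linarith, hvb.le⟩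
    -- the two preimages of x r
    have hlm : x r / lam ∈ Set.Icc (lam * (1 - lam / 2)) (lam / 2) := by
      constructor
      · rw [le_div_iff₀ hl0]; nlinarith
      · rw [div_le_iff₀ hl0]; nlinarith
    have hTlm : T (x r / lam) = x r := by
      rw [hT]
      have e0 : lam * (x r / lam) = x r := mul_div_cancel₀ _ hl0.ne'
      have e2 : lam * (1 - x r / lam) = lam - x r := by rw [mul_sub, mul_one, e0]
      rw [e0, e2]
      exact min_eq_left (by linarith)
    have hgm := hg_mem _ hxrmem
    have hTgm := hTg _ hxrmem
    have hnepre : x r / lam ≠ tentG lam (x r) := by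
      have h1 : x r / lam < 1 / 2 := by rw [div_lt_iff₀ hl0]; linarith
      unfold tentG
      intro h
      linarith [h]
    obtain ⟨w, hwm, hwT, hwne⟩ : ∃ w, w ∈ Set.Icc (lam * (1 - lam / 2)) (lam / 2) ∧
        T w = x r ∧ w ≠ x (r + 1) := by
      by_cases hcase : x (r + 1) = x r / lam
      · exact ⟨tentG lam (x r), hgm, hTgm, fun h => hnepre ((h.trans hcase).symm)⟩
      · exact ⟨x r / lam, hlm, hTlm, fun h => hcase h.symm⟩
    refine ⟨fun s => if s ≤ r then x s else (tentG lam)^[s - (r + 1)] w,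
      ⟨fun s => ?_, fun s => ?_, ?_⟩, ?_, fun s hs => ?_⟩
    · dsimp only
      split_ifs with h
      · exact hxm s
      · exact hgiter_mem _ _ hwm
    · dsimp only
      rcases lt_trichotomy s r with h | h | h
      · rw [if_pos (Nat.succ_le_of_lt h), if_pos h.le]
        exact hxT s
      · subst h
        rw [if_neg (by omega), if_pos le_rfl]
        have he : s + 1 - (s + 1) = 0 := by omega
        rw [he]
        simpa using hwT
      · rw [if_neg (by omega), if_neg (by omega)]
        have h1 : s + 1 - (r + 1) = (s - (r + 1)) + 1 := by omega
        rw [h1, Function.iterate_succ_apply']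
        exact hTg _ (hgiter_mem _ _ hwm)
    · dsimp only
      rw [if_pos (Nat.zero_le r)]
      exact hxz
    · intro h
      apply hwne
      have h2 := congrFun h (r + 1)
      rw [show (if r + 1 ≤ r then x (r+1) else (tentG lam)^[r + 1 - (r + 1)] w) = w by
        rw [if_neg (by omega)]; simp] at h2
      simpa using h2
    · dsimp only
      rw [if_pos (by omega : s ≤ r)]
  have hpp : Preperfect {x : ℕ → ℝ |
      (∀ r, x r ∈ Set.Icc (lam * (1 - lam / 2)) (lam / 2)) ∧
      (∀ r, T (x (r + 1)) = x r) ∧ x 0 = x0} := by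
    rw [preperfect_iff_nhds]
    intro x hx U hU
    choose Y hYC hYne hYeq using hperf_key x hx
    have htend : Filter.Tendsto Y Filter.atTop (nhds x) := by
      rw [tendsto_pi_nhds]
      intro s
      apply Filter.Tendsto.congr' _ tendsto_const_nhds
      filter_upwards [Filter.eventually_ge_atTop s] with n hn
      exact (hYeq n s hn).symm
    have hev : ∀ᶠ n in Filter.atTop, Y n ∈ U := htend.eventually (eventually_mem_nhds_iff.mpr ?_) |>.mono fun n hn => mem_of_mem_nhds hn
    · obtain ⟨n, hn⟩ := hev.exists
      exact ⟨Y n, ⟨hn, hYC n⟩, hYne n⟩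
    · exact hU
  -- TOTALLY DISCONNECTED
  have hFmem : ∀ z ∈ {x : ℕ → ℝ |
      (∀ r, x r ∈ Set.Icc (lam * (1 - lam / 2)) (lam / 2)) ∧
      (∀ r, T (x (r + 1)) = x r) ∧ x 0 = x0}, ∀ r, z r ∈ tentF lam x0 r := by
    intro z hz r
    obtain ⟨hzm, hzT, hz0⟩ := hz
    induction r with
    | zero => simp [tentF, hz0]
    | succ r ih =>
      rcases hpre (z r) (z (r + 1)) (hzm (r + 1)) (hzT r) with h | h
      · exact Or.inl ⟨z r, ih, h.symm⟩
      · exact Or.inr ⟨z r, ih, h.symm⟩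
  have htd : IsTotallyDisconnected {x : ℕ → ℝ |
      (∀ r, x r ∈ Set.Icc (lam * (1 - lam / 2)) (lam / 2)) ∧
      (∀ r, T (x (r + 1)) = x r) ∧ x 0 = x0} := by
    intro t hts hpc x hx y hy
    by_contra hne2
    obtain ⟨r, hr⟩ : ∃ r, x r ≠ y r := by
      by_contra h
      push_neg at h
      exact hne2 (funext h)
    have himg : IsPreconnected ((fun z : ℕ → ℝ => z r) '' t) :=
      hpc.image _ (continuous_apply r).continuousOn
    have hoc := himg.ordConnected
    have hxm2 : x r ∈ (fun z : ℕ → ℝ => z r) '' t := ⟨x, hx, rfl⟩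
    have hym2 : y r ∈ (fun z : ℕ → ℝ => z r) '' t := ⟨y, hy, rfl⟩
    have hsub : (fun z : ℕ → ℝ => z r) '' t ⊆ tentF lam x0 r := by
      rintro v ⟨z, hz, rfl⟩
      exact hFmem z (hts hz) r
    have hfin : ((fun z : ℕ → ℝ => z r) '' t).Finite :=
      (tentF_finite lam x0 r).subset hsub
    rcases hr.lt_or_gt with h | h
    · exact Set.Icc_infinite h (hfin.subset (hoc.out hxm2 hym2))
    · exact Set.Icc_infinite h (hfin.subset (hoc.out hym2 hxm2))
  exact ⟨hne, hcompact, ⟨hclosed, hpp⟩, htd⟩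
end

section
/- The unimodal order reflects the order of points under itineraries: for the core tent map f, if x, y ∈ I have itineraries s = j(x) and t = j(y) (meaning f^r(x) ∈ [a,c] when s_r = 0 and f^r(x) ∈ [c,b] when s_r = 1, similarly for y), and x < y, then s ≼ t in the unimodal order. -/
/-- The strict unimodal (parity-lexicographical) order on `{0,1}^ℕ`. -/
def uLt (s t : ℕ → Fin 2) : Prop :=
  ∃ r : ℕ, (∀ i < r, s i = t i) ∧ s r ≠ t r ∧
    Even (∑ i ∈ Finset.range (r + 1), (s i : ℕ))

/-- `s` is an itinerary of `x` under `f`: whenever `s_r = 0`, `f^r(x) ∈ [a,c]`, and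
whenever `s_r = 1`, `f^r(x) ∈ [c,b]`. -/
def IsItinerary (f : ℝ → ℝ) (a c b : ℝ) (x : ℝ) (s : ℕ → Fin 2) : Prop :=
  ∀ r : ℕ, (s r = 0 → f^[r] x ∈ Set.Icc a c) ∧ (s r = 1 → f^[r] x ∈ Set.Icc c b)

/-- The unimodal order reflects the order of points on the interval: for the core tent
map, if `x < y` and `s`, `t` are itineraries of `x`, `y` respectively, then `s ≼ t`. -/
theorem unimodal_order_reflects
    (lam : ℝ) (hlam : lam ∈ Set.Ioo (Real.sqrt 2) 2)
    (T : ℝ → ℝ) (hT : ∀ x, T x = min (lam * x) (lam * (1 - x)))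
    (a b c : ℝ) (ha : a = lam * (1 - lam / 2)) (hb : b = lam / 2) (hc : c = 1/2)
    (x y : ℝ) (hx : x ∈ Set.Icc a b) (hy : y ∈ Set.Icc a b)
    (s t : ℕ → Fin 2)
    (hs : IsItinerary T a c b x s) (ht : IsItinerary T a c b y t)
    (hxy : x < y) :
    uLt s t ∨ s = t := by
  by_cases hst : s = t
  · exact Or.inr hst
  left
  have hpos : 0 < lam := lt_of_le_of_lt (Real.sqrt_nonneg 2) hlam.1
  have h01 : ∀ i : Fin 2, i = 0 ∨ i = 1 := by decide
  -- T is lam*u on [·, 1/2], lam*(1-u) on [1/2, ·]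
  have hTle : ∀ u : ℝ, u ≤ 1/2 → T u = lam * u := by
    intro u hu
    rw [hT u, min_eq_left]
    have : u ≤ 1 - u := by linarith
    exact mul_le_mul_of_nonneg_left this hpos.le
  have hTge : ∀ u : ℝ, 1/2 ≤ u → T u = lam * (1 - u) := by
    intro u hu
    rw [hT u, min_eq_right]
    have : 1 - u ≤ u := by linarith
    exact mul_le_mul_of_nonneg_left this hpos.le
  -- the least index where s and t differ
  have hex : ∃ n, s n ≠ t n := by
    by_contra h
    push_neg at h
    exact hst (funext h)
  set r := Nat.find hex with hr
  have hne : s r ≠ t r := Nat.find_spec hex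
  have heq : ∀ i < r, s i = t i := fun i hi => by
    have := Nat.find_min hex hi
    simpa using this
  -- key claim by induction
  have key : ∀ i, (∀ j < i, s j = t j) →
      (Even (∑ j ∈ Finset.range i, (s j : ℕ)) → T^[i] x < T^[i] y) ∧
      (¬Even (∑ j ∈ Finset.range i, (s j : ℕ)) → T^[i] y < T^[i] x) := by
    intro i
    induction i with
    | zero =>
      intro _
      constructor
      · intro _; simpa using hxy
      · intro h; exact absurd (by simp) h
    | succ i ih =>
      intro hagree
      have ih' := ih (fun j hj => hagree j (Nat.lt_succ_of_lt hj))
      have hji : s i = t i := hagree i (Nat.lt_succ_self i)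
      have hsum : (∑ j ∈ Finset.range (i+1), (s j : ℕ))
          = (∑ j ∈ Finset.range i, (s j : ℕ)) + (s i : ℕ) :=
        Finset.sum_range_succ _ _
      rw [Function.iterate_succ_apply', Function.iterate_succ_apply']
      set u := T^[i] x with hu
      set v := T^[i] y with hv
      rcases h01 (s i) with h0 | h1
      · -- both in [a, c], T increasing
        have hu2 : u ≤ 1/2 := by
          have := ((hs i).1 h0).2; rw [hc] at this; exact this
        have hv2 : v ≤ 1/2 := by
          have := ((ht i).1 (hji ▸ h0)).2; rw [hc] at this; exact this
        have hsum0 : (∑ j ∈ Finset.range (i+1), (s j : ℕ))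
            = ∑ j ∈ Finset.range i, (s j : ℕ) := by
          rw [hsum, h0]; simp
        rw [hTle u hu2, hTle v hv2, hsum0]
        constructor
        · intro he
          exact mul_lt_mul_of_pos_left (ih'.1 he) hpos
        · intro he
          exact mul_lt_mul_of_pos_left (ih'.2 he) hpos
      · -- both in [c, b], T decreasing
        have hu2 : 1/2 ≤ u := by
          have := ((hs i).2 h1).1; rw [hc] at this; exact this
        have hv2 : 1/2 ≤ v := by
          have := ((ht i).2 (hji ▸ h1)).1; rw [hc] at this; exact this
        have hsum1 : (∑ j ∈ Finset.range (i+1), (s j : ℕ))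
            = (∑ j ∈ Finset.range i, (s j : ℕ)) + 1 := by
          rw [hsum, h1]; norm_num
        rw [hTge u hu2, hTge v hv2, hsum1]
        constructor
        · intro he
          rw [Nat.even_add_one] at he
          have := ih'.2 he
          have : 1 - u < 1 - v := by linarith
          exact mul_lt_mul_of_pos_left this hpos
        · intro he
          rw [Nat.even_add_one, not_not] at he
          have := ih'.1 he
          have : 1 - v < 1 - u := by linarith
          exact mul_lt_mul_of_pos_left this hpos
  have keyr := key r heq
  have hsum : (∑ j ∈ Finset.range (r+1), (s j : ℕ))
      = (∑ j ∈ Finset.range r, (s j : ℕ)) + (s r : ℕ) :=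
    Finset.sum_range_succ _ _
  rcases h01 (s r) with h0 | h1 <;> rcases h01 (t r) with h0' | h1'
  · exact absurd (h0.trans h0'.symm) hne
  · -- s r = 0, t r = 1 : need Even sum_r
    refine ⟨r, heq, hne, ?_⟩
    have hu2 : T^[r] x ≤ 1/2 := by
      have := ((hs r).1 h0).2; rw [hc] at this; exact this
    have hv2 : 1/2 ≤ T^[r] y := by
      have := ((ht r).2 h1').1; rw [hc] at this; exact this
    have heven : Even (∑ j ∈ Finset.range r, (s j : ℕ)) := by
      by_contra hodd
      have := keyr.2 hodd
      linarith
    rw [hsum, h0]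
    simpa using heven
  · -- s r = 1, t r = 0 : need Odd sum_r
    refine ⟨r, heq, hne, ?_⟩
    have hu2 : 1/2 ≤ T^[r] x := by
      have := ((hs r).2 h1).1; rw [hc] at this; exact this
    have hv2 : T^[r] y ≤ 1/2 := by
      have := ((ht r).1 h0').2; rw [hc] at this; exact this
    have hodd : ¬Even (∑ j ∈ Finset.range r, (s j : ℕ)) := by
      intro heven
      have := keyr.1 heven
      linarith
    rw [hsum, h1]; simp only [Fin.val_one]; rw [Nat.even_add_one]
    simpa using hodd
  · exact absurd (h1.trans h1'.symm) hne
end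

section
/- The map L_x : K_x → π₀⁻¹(x) sending each realizable itinerary to the unique thread in the fiber over x with that itinerary is continuous; more strongly, if x, y ∈ Î satisfy |x_0 − y_0| < ε and have itineraries agreeing in positions 0 through R, then |x_r − y_r| < ε/λ^r for all r ≤ R, hence d(x, y) < 2ε + 2^{-R}·diam(I). -/
set_option maxHeartbeats 1000000 in
/-- Quantitative continuity of `L_x`: if two threads of the tent map inverse limit have
0th coordinates within `ε` of each other, and itineraries agreeing in positions `0`
through `R`, then their `r`-th coordinates differ by less than `ε/λ^r` for all `r ≤ R`;
consequently their distance `d(x,y) = Σ |x_r − y_r|/2^r` is less than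
`2ε + diam(I)/2^R`. -/
theorem itinerary_quantitative_continuity
    (lam : ℝ) (hlam : lam ∈ Set.Ioo (Real.sqrt 2) 2)
    (T : ℝ → ℝ) (hT : ∀ z, T z = min (lam * z) (lam * (1 - z)))
    (a b c : ℝ) (ha : a = lam * (1 - lam / 2)) (hb : b = lam / 2) (hc : c = 1/2)
    (x y : ℕ → ℝ)
    (hxmem : ∀ r, x r ∈ Set.Icc a b) (hymem : ∀ r, y r ∈ Set.Icc a b)
    (hxth : ∀ r, T (x (r + 1)) = x r) (hyth : ∀ r, T (y (r + 1)) = y r)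
    (s t : ℕ → Fin 2)
    (hsx : ∀ r, (s r = 0 → x (r + 1) ≤ c) ∧ (s r = 1 → c ≤ x (r + 1)))
    (hty : ∀ r, (t r = 0 → y (r + 1) ≤ c) ∧ (t r = 1 → c ≤ y (r + 1)))
    (R : ℕ) (hst : ∀ i ≤ R, s i = t i)
    (ε : ℝ) (hε : 0 < ε) (h0 : |x 0 - y 0| < ε) :
    (∀ r ≤ R, |x r - y r| < ε / lam ^ r) ∧
    (∑' r : ℕ, |x r - y r| / 2 ^ r) < 2 * ε + (b - a) / 2 ^ R := by
  have hsqrt : (1:ℝ) < Real.sqrt 2 := by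
    have h := Real.sqrt_lt_sqrt (by norm_num : (0:ℝ) ≤ 1) (by norm_num : (1:ℝ) < 2)
    simpa using h
  have hlam1 : 1 < lam := lt_trans hsqrt hlam.1
  have hlam0 : 0 < lam := lt_trans one_pos hlam1
  -- Part 1
  have key : ∀ r, r ≤ R → |x r - y r| < ε / lam ^ r := by
    intro r
    induction r with
    | zero => intro _; simpa using h0
    | succ n ih =>
      intro h
      have hn : n ≤ R := Nat.le_of_succ_le h
      have hst' : s n = t n := hst n hn
      have hmain : |x n - y n| = lam * |x (n + 1) - y (n + 1)| := by
        have hs2 : s n = 0 ∨ s n = 1 := by omega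
        rcases hs2 with hs0 | hs1
        · have hx1 : x (n + 1) ≤ c := (hsx n).1 hs0
          have hy1 : y (n + 1) ≤ c := (hty n).1 (hst' ▸ hs0)
          have e1 : T (x (n + 1)) = lam * x (n + 1) := by
            rw [hT]; exact min_eq_left (by nlinarith [hx1, hc ▸ hx1])
          have e2 : T (y (n + 1)) = lam * y (n + 1) := by
            rw [hT]; exact min_eq_left (by nlinarith [hy1, hc ▸ hy1])
          have ex : x n = lam * x (n + 1) := by rw [← hxth n, e1]
          have ey : y n = lam * y (n + 1) := by rw [← hyth n, e2]
          rw [ex, ey, ← mul_sub, abs_mul, abs_of_pos hlam0]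
        · have hx1 : c ≤ x (n + 1) := (hsx n).2 hs1
          have hy1 : c ≤ y (n + 1) := (hty n).2 (hst' ▸ hs1)
          have e1 : T (x (n + 1)) = lam * (1 - x (n + 1)) := by
            rw [hT]; exact min_eq_right (by nlinarith [hx1, hc ▸ hx1])
          have e2 : T (y (n + 1)) = lam * (1 - y (n + 1)) := by
            rw [hT]; exact min_eq_right (by nlinarith [hy1, hc ▸ hy1])
          have ex : x n = lam * (1 - x (n + 1)) := by rw [← hxth n, e1]
          have ey : y n = lam * (1 - y (n + 1)) := by rw [← hyth n, e2]
          have : x n - y n = lam * (y (n + 1) - x (n + 1)) := by rw [ex, ey]; ring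
          rw [this, abs_mul, abs_of_pos hlam0, abs_sub_comm]
      have hfin := ih hn
      rw [hmain] at hfin
      rw [pow_succ, ← div_div]
      rw [lt_div_iff₀ hlam0]
      linarith [mul_comm lam |x (n + 1) - y (n + 1)|]
  refine ⟨key, ?_⟩
  -- Part 2
  have hc2 : (1:ℝ) < 2 := one_lt_two
  have hD : 0 ≤ b - a := by rw [ha, hb]; nlinarith
  have hbound : ∀ r, |x r - y r| ≤ b - a := by
    intro r
    have hx := hxmem r
    have hy := hymem r
    rw [abs_sub_le_iff]
    constructor <;> [linarith [hx.2, hy.1]; linarith [hy.2, hx.1]]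
  have hg : Summable (fun r : ℕ => (b - a) * (1/2:ℝ) ^ r) :=
    (summable_geometric_of_lt_one (by norm_num) (by norm_num)).mul_left _
  have hfg : ∀ r : ℕ, |x r - y r| / 2 ^ r ≤ (b - a) * (1/2:ℝ) ^ r := by
    intro r
    rw [div_pow, one_pow, mul_one_div]
    gcongr
    exact hbound r
  have hf : Summable (fun r : ℕ => |x r - y r| / 2 ^ r) :=
    Summable.of_nonneg_of_le (fun r => by positivity) hfg hg
  rw [← Summable.sum_add_tsum_nat_add (R + 1) hf]
  have hhead : ∑ i ∈ Finset.range (R + 1), |x i - y i| / 2 ^ i < 2 * ε := by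
    have h1 : ∀ i ∈ Finset.range (R + 1), |x i - y i| / 2 ^ i < ε * (1/2:ℝ) ^ i := by
      intro i hi
      have hi' : i ≤ R := Nat.lt_succ_iff.mp (Finset.mem_range.mp hi)
      have hk := key i hi'
      have hpow : (1:ℝ) ≤ lam ^ i := one_le_pow₀ hlam1.le
      have hle : ε / lam ^ i ≤ ε := div_le_self hε.le hpow
      rw [div_pow, one_pow, mul_one_div]
      gcongr
      exact lt_of_lt_of_le hk hle
    calc ∑ i ∈ Finset.range (R + 1), |x i - y i| / 2 ^ i
        < ∑ i ∈ Finset.range (R + 1), ε * (1/2:ℝ) ^ i :=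
          Finset.sum_lt_sum_of_nonempty (by simp) h1
      _ = ε * ∑ i ∈ Finset.range (R + 1), (1/2:ℝ) ^ i := by rw [Finset.mul_sum]
      _ < 2 * ε := by
          have hgeo : ∑ i ∈ Finset.range (R + 1), (1/2:ℝ) ^ i < 2 := by
            have := geom_sum_eq (by norm_num : (1/2:ℝ) ≠ 1) (R + 1)
            rw [this, div_lt_iff_of_neg (by norm_num : (1/2:ℝ) - 1 < 0)]
            have hp : (0:ℝ) < (1/2:ℝ) ^ (R + 1) := by positivity
            linarith
          nlinarith
  have htail : (∑' i : ℕ, |x (i + (R + 1)) - y (i + (R + 1))| / 2 ^ (i + (R + 1)))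
      ≤ (b - a) / 2 ^ R := by
    have hsum1 : Summable (fun i : ℕ => |x (i + (R + 1)) - y (i + (R + 1))| / 2 ^ (i + (R + 1))) :=
      (summable_nat_add_iff (R + 1)).mpr hf
    have hsum2 : Summable (fun i : ℕ => (b - a) / 2 ^ (R + 1) * (1/2:ℝ) ^ i) :=
      (summable_geometric_of_lt_one (by norm_num) (by norm_num)).mul_left _
    have hterm : ∀ i : ℕ, |x (i + (R + 1)) - y (i + (R + 1))| / 2 ^ (i + (R + 1))
        ≤ (b - a) / 2 ^ (R + 1) * (1/2:ℝ) ^ i := by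
      intro i
      have h1 : |x (i + (R + 1)) - y (i + (R + 1))| / 2 ^ (i + (R + 1))
          ≤ (b - a) / 2 ^ (i + (R + 1)) := by
        gcongr
        exact hbound _
      refine h1.trans_eq ?_
      rw [pow_add, div_pow, one_pow, mul_one_div, div_div, mul_comm]
    calc (∑' i : ℕ, |x (i + (R + 1)) - y (i + (R + 1))| / 2 ^ (i + (R + 1)))
        ≤ ∑' i : ℕ, (b - a) / 2 ^ (R + 1) * (1/2:ℝ) ^ i := Summable.tsum_le_tsum hterm hsum1 hsum2
      _ = (b - a) / 2 ^ (R + 1) * (1 - 1/2)⁻¹ := by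
          rw [tsum_mul_left, tsum_geometric_of_lt_one (by norm_num) (by norm_num)]
      _ = (b - a) / 2 ^ R := by
          rw [show ((1:ℝ) - 1/2)⁻¹ = 2 by norm_num, pow_succ, ← div_div,
            div_mul_cancel₀ _ (two_ne_zero)]
  linarith
end

section
/- The outside circle map B is continuous, monotone (weakly order-preserving as a degree-one circle map) and surjective: B agrees with the bijection B̃ on [a, â_u) and is constant equal to f(a)_ℓ on the complementary arc γ = [â_u, a], where B̃ is defined by B̃(x_ℓ) = f(x)_ℓ for x ∈ [a,c], B̃(x_ℓ) = f(x)_u for x ∈ [c,b], B̃(x_u) = f(x)_ℓ for x ∈ (â, b]. -/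
set_option maxHeartbeats 1000000


/-- The outside map. The circle `S` is obtained by gluing two copies of the core
interval `[a,b]` at their endpoints; we model it as `AddCircle L` with `L = 2(b-a)`,
the lower point `x_ℓ` corresponding to `x - a` and the upper point `x_u` to
`2b - a - x`. The outside map `B` is a continuous, monotone (it admits a monotone
degree-one lift), surjective circle map which agrees with the bijection `B̃` on
`[a, â_u)`, i.e. `B̃(x_ℓ) = f(x)_ℓ` for `x ∈ [a,c]`, `B̃(x_ℓ) = f(x)_u` for
`x ∈ [c,b]`, `B̃(x_u) = f(x)_ℓ` for `x ∈ (â, b]`, and is constant equal to `f(a)_ℓ` on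
the complementary arc `γ = [â_u, a]` (upper points `x_u` for `x ∈ [a, â]`). -/
theorem outside_map_exists
    (lam : ℝ) (hlam : lam ∈ Set.Ioo (Real.sqrt 2) 2)
    (T : ℝ → ℝ) (hT : ∀ z, T z = min (lam * z) (lam * (1 - z)))
    (a b c ahat : ℝ)
    (ha : a = lam * (1 - lam / 2)) (hb : b = lam / 2) (hc : c = 1/2)
    (hahat : ahat = 1 - a)
    (L : ℝ) (hL : L = 2 * (b - a)) :
    ∃ B : AddCircle L → AddCircle L,
      Continuous B ∧ Function.Surjective B ∧
      (∃ β : ℝ → ℝ, Monotone β ∧ (∀ t, β (t + L) = β t + L) ∧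
        ∀ t : ℝ, B (t : AddCircle L) = ((β t : ℝ) : AddCircle L)) ∧
      (∀ x ∈ Set.Icc a c, B ((x - a : ℝ) : AddCircle L) = ((T x - a : ℝ) : AddCircle L)) ∧
      (∀ x ∈ Set.Icc c b, B ((x - a : ℝ) : AddCircle L) = ((2*b - a - T x : ℝ) : AddCircle L)) ∧
      (∀ x ∈ Set.Ioc ahat b, B ((2*b - a - x : ℝ) : AddCircle L) = ((T x - a : ℝ) : AddCircle L)) ∧
      (∀ x ∈ Set.Icc a ahat, B ((2*b - a - x : ℝ) : AddCircle L) = ((T a - a : ℝ) : AddCircle L)) := by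
  obtain ⟨hl1, hl2⟩ := hlam
  have hsq : Real.sqrt 2 ^ 2 = 2 := Real.sq_sqrt (by norm_num)
  have hs1 : (1:ℝ) < Real.sqrt 2 := by nlinarith [Real.sqrt_nonneg 2]
  have hlam1 : 1 < lam := lt_trans hs1 hl1
  have hlam0 : 0 < lam := by linarith
  have hlamsq : 2 < lam ^ 2 := by nlinarith [Real.sqrt_nonneg 2]
  have hLeq : L = lam ^ 2 - lam := by rw [hL, hb, ha]; ring
  have hLpos : 0 < L := by nlinarith
  have hahalf : a ≤ 1/2 := by nlinarith
  -- the lift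
  obtain ⟨β, hβ⟩ : ∃ β : ℝ → ℝ, ∀ t : ℝ,
      β t = (lam * a - a) + L * ⌊t/L⌋ + min (lam * (t - L * ⌊t/L⌋)) L :=
    ⟨_, fun t => rfl⟩
  have hfr : ∀ t : ℝ, 0 ≤ t - L * ⌊t/L⌋ ∧ t - L * ⌊t/L⌋ < L := by
    intro t
    have h1 := Int.fract_nonneg (t/L)
    have h2 := Int.fract_lt_one (t/L)
    have h3 : t - L * ⌊t/L⌋ = Int.fract (t/L) * L := by
      rw [Int.fract]; field_simp
    constructor <;> nlinarith
  have hper : ∀ (t : ℝ) (k : ℤ), β (t + k * L) = β t + k * L := by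
    intro t k
    have hfl : ⌊(t + k*L)/L⌋ = ⌊t/L⌋ + k := by
      rw [show (t + k*L)/L = t/L + k by field_simp, Int.floor_add_intCast]
    rw [hβ, hβ, hfl]
    push_cast
    rw [show (t + k*L) - L * ((⌊t/L⌋:ℝ) + k) = t - L * ⌊t/L⌋ by ring]
    ring
  have hmono : Monotone β := by
    intro t t' htt
    have hfl : ⌊t/L⌋ ≤ ⌊t'/L⌋ := Int.floor_le_floor (by gcongr)
    rw [hβ, hβ]
    rcases eq_or_lt_of_le hfl with heq | hlt
    · rw [← heq]
      have h1 : lam * (t - L*⌊t/L⌋) ≤ lam * (t' - L*⌊t/L⌋) := by nlinarith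
      have := min_le_min h1 (le_refl L)
      linarith
    · have h1 : min (lam * (t - L*⌊t/L⌋)) L ≤ L := min_le_right _ _
      have h2 : (0:ℝ) ≤ min (lam * (t' - L*⌊t'/L⌋)) L :=
        le_min (by nlinarith [(hfr t').1]) hLpos.le
      have h3 : (⌊t/L⌋:ℝ) + 1 ≤ (⌊t'/L⌋:ℝ) := by exact_mod_cast hlt
      nlinarith
  have hβsurj : Function.Surjective β := by
    intro y
    obtain ⟨hs0, hsL⟩ := hfr (y - (lam * a - a))
    set n : ℤ := ⌊(y - (lam * a - a))/L⌋ with hn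
    set s : ℝ := (y - (lam * a - a)) - L * n with hs
    have hdiv0 : 0 ≤ s / lam := div_nonneg hs0 hlam0.le
    have hdivL : s / lam < L := by rw [div_lt_iff₀ hlam0]; nlinarith
    refine ⟨L * n + s / lam, ?_⟩
    have hfl : ⌊(L * n + s / lam)/L⌋ = n := by
      rw [Int.floor_eq_iff]
      constructor
      · rw [le_div_iff₀ hLpos]; nlinarith
      · rw [div_lt_iff₀ hLpos]; push_cast; nlinarith
    rw [hβ, hfl]
    have harg : L * n + s / lam - L * n = s / lam := by ring
    rw [harg, mul_div_cancel₀ _ hlam0.ne', min_eq_left hsL.le]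
    rw [hs]
    ring
  have hβcont : Continuous β := hmono.continuous_of_surjective hβsurj
  -- the circle map
  haveI : Fact (0 < L) := ⟨hLpos⟩
  obtain ⟨B, hBdef⟩ : ∃ B : AddCircle L → AddCircle L, ∀ x,
      B x = ((β ((AddCircle.equivIco L 0 x : ℝ))) : AddCircle L) := ⟨_, fun x => rfl⟩
  have hcoe : ∀ (r : ℝ) (k : ℤ), ((r + k * L : ℝ) : AddCircle L) = (r : AddCircle L) := by
    intro r k
    have h0 : ((k * L : ℝ) : AddCircle L) = 0 := by
      rw [show (k : ℝ) * L = (k : ℤ) • L by simp [zsmul_eq_mul]]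
      rw [AddCircle.coe_zsmul, AddCircle.coe_period, smul_zero]
    rw [show ((r + k * L : ℝ) : AddCircle L) = (r : AddCircle L) + ((k*L : ℝ) : AddCircle L)
        from rfl, h0, add_zero]
  have hB : ∀ t : ℝ, B (t : AddCircle L) = ((β t : ℝ) : AddCircle L) := by
    intro t
    rw [hBdef, AddCircle.coe_equivIco_mk_apply]
    have h1 : Int.fract (t/L) * L = t + (-⌊t/L⌋ : ℤ) * L := by
      rw [Int.fract]; push_cast; field_simp; ring
    rw [h1, hper t (-⌊t/L⌋)]
    exact hcoe _ _
  have hβsmall : ∀ t : ℝ, 0 ≤ t → t < L → β t = (lam * a - a) + min (lam * t) L := by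
    intro t h0 h1
    rw [hβ]
    have hfl : ⌊t/L⌋ = 0 := by
      rw [Int.floor_eq_zero_iff, Set.mem_Ico]
      exact ⟨div_nonneg h0 hLpos.le, by rwa [div_lt_one hLpos]⟩
    rw [hfl]
    rw [Int.cast_zero, mul_zero, add_zero, sub_zero]
  refine ⟨B, ?_, ?_, ⟨β, hmono, fun t => by have h := hper t 1; rw [Int.cast_one, one_mul] at h; exact h, hB⟩, ?_, ?_, ?_, ?_⟩
  · -- continuity
    rw [isQuotientMap_quotient_mk'.continuous_iff]
    have : (QuotientAddGroup.mk' (AddSubgroup.zmultiples L) : ℝ → AddCircle L) =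
        fun t : ℝ => (t : AddCircle L) := rfl
    have heq : (B ∘ fun t : ℝ => (t : AddCircle L)) = fun t : ℝ => ((β t : ℝ) : AddCircle L) :=
      funext fun t => hB t
    show Continuous (B ∘ fun t : ℝ => (t : AddCircle L))
    rw [heq]
    exact continuous_quotient_mk'.comp hβcont
  · -- surjectivity
    intro y
    induction y using QuotientAddGroup.induction_on with
    | H r =>
      obtain ⟨t, ht⟩ := hβsurj r
      exact ⟨(t : AddCircle L), by rw [hB, ht]⟩
  · -- spec 1 : x ∈ [a, c], lower copy, x ≤ c
    intro x hx
    obtain ⟨hx1, hx2⟩ := hx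
    rw [hc] at hx2
    have h0 : 0 ≤ x - a := by linarith
    have h1 : x - a < L := by rw [hLeq]; nlinarith
    have hmin : lam * (x - a) ≤ L := by
      rw [hLeq, ha]
      nlinarith [mul_pos (sub_pos.mpr hlam1) (sub_pos.mpr hlam1)]
    rw [hB, hβsmall _ h0 h1, min_eq_left hmin, hT,
      min_eq_left (by nlinarith : lam * x ≤ lam * (1 - x))]
    congr 1
    ring
  · -- spec 2 : x ∈ [c, b], lower copy, x ≥ c
    intro x hx
    obtain ⟨hx1, hx2⟩ := hx
    rw [hc] at hx1
    rw [hb] at hx2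
    have h0 : 0 ≤ x - a := by linarith
    have h1 : x - a < L := by rw [hLeq, ha]; nlinarith
    have hmin : lam * (x - a) ≤ L := by rw [hLeq, ha]; nlinarith
    rw [hB, hβsmall _ h0 h1, min_eq_left hmin, hT,
      min_eq_right (by nlinarith : lam * (1 - x) ≤ lam * x)]
    congr 1
    rw [hb]
    ring
  · -- spec 3 : x ∈ (ahat, b], upper copy
    intro x hx
    obtain ⟨hx1, hx2⟩ := hx
    rw [hahat] at hx1
    rw [hb] at hx2
    have h0 : 0 ≤ 2*b - a - x := by rw [hb]; nlinarith
    have h1 : 2*b - a - x < L := by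
      rw [hLeq, hb]
      nlinarith [mul_pos (sub_pos.mpr hlam1) (sub_pos.mpr hlam1)]
    have hmin : lam * (2*b - a - x) ≤ L := by rw [hLeq, hb]; nlinarith
    rw [hB, hβsmall _ h0 h1, min_eq_left hmin, hT,
      min_eq_right (by nlinarith : lam * (1 - x) ≤ lam * x)]
    rw [show lam * a - a + lam * (2*b - a - x)
        = (lam * (1 - x) - a) + ((1:ℤ):ℝ) * L by rw [hLeq, hb]; push_cast; ring]
    exact hcoe _ 1
  · -- spec 4 : x ∈ [a, ahat], upper copy, constant value
    intro x hx
    obtain ⟨hx1, hx2⟩ := hx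
    rw [hahat] at hx2
    have htL : 2*b - a - x ≤ L := by rw [hLeq, hb, ha]; nlinarith
    have hβL : β (2*b - a - x) = (lam * a - a) + L := by
      rcases eq_or_lt_of_le htL with heq | hlt
      · rw [heq, show (L:ℝ) = 0 + ((1:ℤ):ℝ) * L by push_cast; ring, hper,
          hβsmall 0 le_rfl hLpos]
        push_cast
        rw [mul_zero, min_eq_left hLpos.le]
        ring
      · have h0 : 0 ≤ 2*b - a - x := by
          rw [hb, ha]
          nlinarith
        have hgeL : L ≤ lam * (2*b - a - x) := by
          rw [hLeq, hb]
          nlinarith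
        rw [hβsmall _ h0 hlt, min_eq_right hgeL]
    rw [hB, hβL, hT, min_eq_left (by nlinarith : lam * a ≤ lam * (1 - a)),
      show lam * a - a + L = (lam * a - a) + ((1:ℤ):ℝ) * L by push_cast; ring]
    exact hcoe _ 1
end
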